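/- Let S be a bounded selfadjoint operator on a complex Hilbert space K with Sp(S) ⊆ [r, R], r < R, and f : [r, R] → ℝ continuous convex with finite one-sided derivatives f′₊(r), f′₋(R). Then for every unit vector x ∈ K, 0 ≤ ⟨f(S) x, x⟩ − f(⟨S x, x⟩) ≤ (1/4)(R − r)[f′₋(R) − f′₊(r)]. -/

import Mathlib

/-!
The state `A ↦ re ⟪A x, x⟫` is monotone and unital, so it turns a scalar inequality between `f` and
an affine function on `[r, R] ⊇ Sp(S)` into the same inequality between `re ⟪f(S) x, x⟫` and that
affine function at `m = re ⟪S x, x⟫`. A supporting line of `f` at `m` gives Jensen's lower bound,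
the chord of `f` over `[r, R]` the upper one, and the chord exceeds `f` at `m` by at most
`(m - r) (R - m) (f'₋(R) - f'₊(r)) / (R - r) ≤ (R - r) (f'₋(R) - f'₊(r)) / 4`.
-/

open scoped InnerProductSpace
open Set

namespace ConvexOn

variable {s : Set ℝ} {f : ℝ → ℝ} {a b m t d da db : ℝ}

theorem add_mul_sub_le_of_hasDerivWithinAt_Ioi (hf : ConvexOn ℝ s f) (ha : a ∈ s) (ht : t ∈ s)
    (hat : a ≤ t) (hd : HasDerivWithinAt f d (Ioi a) a) : f a + d * (t - a) ≤ f t := by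
  rcases hat.eq_or_lt with rfl | hat
  · simp
  have := mul_le_mul_of_nonneg_left (hf.le_slope_of_hasDerivWithinAt_Ioi ha ht hat hd)
    (sub_nonneg.2 hat.le)
  have hslope : (t - a) * slope f a t = f t - f a := sub_smul_slope f a t
  linarith

theorem add_mul_sub_le_of_hasDerivWithinAt_Iio (hf : ConvexOn ℝ s f) (hb : b ∈ s) (ht : t ∈ s)
    (htb : t ≤ b) (hd : HasDerivWithinAt f d (Iio b) b) : f b + d * (t - b) ≤ f t := by
  rcases htb.eq_or_lt with rfl | htb
  · simp
  have := mul_le_mul_of_nonpos_left (hf.slope_le_of_hasDerivWithinAt_Iio ht hb htb hd)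
    (sub_nonpos.2 htb.le)
  have hslope : (t - b) * slope f b t = f t - f b := sub_smul_slope f b t
  rw [slope_comm] at this
  linarith

theorem le_add_slope_mul_sub (hf : ConvexOn ℝ (Icc a b) f) (ht : t ∈ Icc a b) :
    f t ≤ f a + slope f a b * (t - a) := by
  rcases ht.1.eq_or_lt with rfl | hat
  · simp
  have ha : a ∈ Icc a b := ⟨le_rfl, hat.le.trans ht.2⟩
  have hb : b ∈ Icc a b := ⟨hat.le.trans ht.2, le_rfl⟩
  have := mul_le_mul_of_nonneg_left
    (hf.slope_mono ha ⟨ht, hat.ne'⟩ ⟨hb, (hat.trans_le ht.2).ne'⟩ ht.2) (sub_nonneg.2 hat.le)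
  have hslope : (t - a) * slope f a t = f t - f a := sub_smul_slope f a t
  linarith

theorem exists_add_mul_sub_le (hf : ConvexOn ℝ (Icc a b) f)
    (ha : HasDerivWithinAt f da (Ioi a) a) (hb : HasDerivWithinAt f db (Iio b) b)
    (hm : m ∈ Icc a b) : ∃ c, ∀ t ∈ Icc a b, f m + c * (t - m) ≤ f t := by
  rcases hm.1.eq_or_lt with rfl | ham
  · exact ⟨da, fun t ht ↦ hf.add_mul_sub_le_of_hasDerivWithinAt_Ioi hm ht ht.1 ha⟩
  rcases hm.2.eq_or_lt with rfl | hmb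
  · exact ⟨db, fun t ht ↦ hf.add_mul_sub_le_of_hasDerivWithinAt_Iio hm ht ht.2 hb⟩
  have hint : m ∈ interior (Icc a b) := by rw [interior_Icc]; exact ⟨ham, hmb⟩
  refine ⟨derivWithin f (Ioi m) m, fun t ht ↦ ?_⟩
  rcases le_total m t with hmt | htm
  · exact hf.add_mul_sub_le_of_hasDerivWithinAt_Ioi hm ht hmt
      (hf.hasDerivWithinAt_rightDeriv_of_mem_interior hint)
  · have hleft := hf.add_mul_sub_le_of_hasDerivWithinAt_Iio hm ht htm
      (hf.hasDerivWithinAt_leftDeriv_of_mem_interior hint)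
    have := mul_le_mul_of_nonpos_right (hf.leftDeriv_le_rightDeriv_of_mem_interior hint)
      (sub_nonpos.2 htm)
    linarith

theorem add_slope_mul_sub_sub_le (hf : ConvexOn ℝ (Icc a b) f)
    (ha : HasDerivWithinAt f da (Ioi a) a) (hb : HasDerivWithinAt f db (Iio b) b)
    (hm : m ∈ Icc a b) : f a + slope f a b * (m - a) - f m ≤ 1 / 4 * (b - a) * (db - da) := by
  rcases (hm.1.trans hm.2).eq_or_lt with rfl | hab
  · simp [le_antisymm hm.1 hm.2]
  have haI : a ∈ Icc a b := ⟨le_rfl, hab.le⟩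
  have hbI : b ∈ Icc a b := ⟨hab.le, le_rfl⟩
  have hda := hf.add_mul_sub_le_of_hasDerivWithinAt_Ioi haI hm hm.1 ha
  have hdb := hf.add_mul_sub_le_of_hasDerivWithinAt_Iio hbI hm hm.2 hb
  have hdd : da ≤ db := by
    have h₁ := hf.add_mul_sub_le_of_hasDerivWithinAt_Ioi haI hbI hab.le ha
    have h₂ := hf.add_mul_sub_le_of_hasDerivWithinAt_Iio hbI haI hab.le hb
    nlinarith
  have hslope : (b - a) * slope f a b = f b - f a := sub_smul_slope f a b
  rw [← mul_le_mul_iff_of_pos_left (sub_pos.2 hab)]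
  calc (b - a) * (f a + slope f a b * (m - a) - f m)
      = (b - m) * (f a - f m) + (m - a) * (f b - f m) := by linear_combination (m - a) * hslope
    _ ≤ (b - m) * (da * (a - m)) + (m - a) * (db * (b - m)) := by
      gcongr <;> linarith [hm.1, hm.2]
    _ = (m - a) * (b - m) * (db - da) := by ring
    _ ≤ (b - a) * (1 / 4 * (b - a) * (db - da)) := by
      nlinarith [mul_nonneg (sq_nonneg (a + b - 2 * m)) (sub_nonneg.2 hdd)]

end ConvexOn

theorem ContinuousLinearMap.re_inner_le_re_inner_of_le {𝕜 E : Type*} [RCLike 𝕜]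
    [NormedAddCommGroup E] [InnerProductSpace 𝕜 E] {A B : E →L[𝕜] E} (h : A ≤ B) (x : E) :
    RCLike.re ⟪A x, x⟫_𝕜 ≤ RCLike.re ⟪B x, x⟫_𝕜 := by
  have := h.2 x
  rw [reApplyInnerSelf_apply, sub_apply, inner_sub_left, map_sub] at this
  linarith

section

variable {K : Type*} [NormedAddCommGroup K] [InnerProductSpace ℂ K] {S : K →L[ℂ] K} {x : K}

theorem re_inner_algebraMap_apply (hx : ‖x‖ = 1) (a : ℝ) :
    (⟪algebraMap ℝ (K →L[ℂ] K) a x, x⟫_ℂ).re = a := by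
  simp [Algebra.algebraMap_eq_smul_one, hx]

variable [CompleteSpace K]

theorem re_inner_cfc_affine (hS : IsSelfAdjoint S) (hx : ‖x‖ = 1) (a c t₀ : ℝ) :
    (⟪cfc (fun t : ℝ ↦ a + c * (t - t₀)) S x, x⟫_ℂ).re = a + c * ((⟪S x, x⟫_ℂ).re - t₀) := by
  have hcfc : cfc (fun t : ℝ ↦ a + c * (t - t₀)) S = algebraMap ℝ _ (a - c * t₀) + c • S := by
    rw [← cfc_const (a - c * t₀) S, ← cfc_const_mul_id c S, ← cfc_add ..]
    congr 1; ext t; ring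
  rw [hcfc, add_apply, smul_apply, inner_add_left,
    inner_smul_left_eq_smul, Complex.add_re, Complex.smul_re, re_inner_algebraMap_apply hx]
  simp only [smul_eq_mul]; ring

theorem re_inner_cfc_mono {f g : ℝ → ℝ} (hfg : ∀ t ∈ spectrum ℝ S, f t ≤ g t)
    (hf : ContinuousOn f (spectrum ℝ S)) (hg : ContinuousOn g (spectrum ℝ S)) (x : K) :
    (⟪cfc f S x, x⟫_ℂ).re ≤ (⟪cfc g S x, x⟫_ℂ).re :=
  ContinuousLinearMap.re_inner_le_re_inner_of_le (cfc_mono hfg hf hg) x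

theorem re_inner_mem_Icc_of_spectrum_subset (hS : IsSelfAdjoint S) {r R : ℝ}
    (hspec : spectrum ℝ S ⊆ Icc r R) (hx : ‖x‖ = 1) : (⟪S x, x⟫_ℂ).re ∈ Icc r R := by
  have hr := ContinuousLinearMap.re_inner_le_re_inner_of_le
    (algebraMap_le_of_le_spectrum (fun t ht ↦ (hspec ht).1) hS) x
  have hR := ContinuousLinearMap.re_inner_le_re_inner_of_le
    (le_algebraMap_of_spectrum_le (fun t ht ↦ (hspec ht).2) hS) x
  simp only [RCLike.re_to_complex, re_inner_algebraMap_apply hx] at hr hR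
  exact ⟨hr, hR⟩

end

theorem cfc_jensen_defect_quarter_bound_general
    {K : Type*} [NormedAddCommGroup K] [InnerProductSpace ℂ K] [CompleteSpace K]
    (S : K →L[ℂ] K) (hS : IsSelfAdjoint S) (r R : ℝ)
    (hspec : spectrum ℝ S ⊆ Set.Icc r R)
    (f : ℝ → ℝ) (hfc : ContinuousOn f (Set.Icc r R))
    (hf : ConvexOn ℝ (Set.Icc r R) f) (dr dR : ℝ)
    (hdr : HasDerivWithinAt f dr (Set.Ioi r) r)
    (hdR : HasDerivWithinAt f dR (Set.Iio R) R)
    (x : K) (hx : ‖x‖ = 1) :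
    0 ≤ (⟪(cfc f S) x, x⟫_ℂ).re - f ((⟪S x, x⟫_ℂ).re) ∧
    (⟪(cfc f S) x, x⟫_ℂ).re - f ((⟪S x, x⟫_ℂ).re) ≤
      (1 / 4) * (R - r) * (dR - dr) := by
  set m := (⟪S x, x⟫_ℂ).re
  have hm : m ∈ Icc r R := re_inner_mem_Icc_of_spectrum_subset hS hspec hx
  have hfS : ContinuousOn f (spectrum ℝ S) := hfc.mono hspec
  obtain ⟨c, hc⟩ := hf.exists_add_mul_sub_le hdr hdR hm
  have jensen : f m ≤ (⟪cfc f S x, x⟫_ℂ).re := by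
    have := re_inner_cfc_mono (fun t ht ↦ hc t (hspec ht)) (by fun_prop) hfS x
    rwa [re_inner_cfc_affine hS hx, sub_self, mul_zero, add_zero] at this
  have chord : (⟪cfc f S x, x⟫_ℂ).re ≤ f r + slope f r R * (m - r) := by
    rw [← re_inner_cfc_affine hS hx]
    exact re_inner_cfc_mono (fun t ht ↦ hf.le_add_slope_mul_sub (hspec ht)) hfS (by fun_prop) x
  have defect := hf.add_slope_mul_sub_sub_le hdr hdR hm
  constructor <;> linarith

theorem cfc_jensen_defect_quarter_bound
    {K : Type*} [NormedAddCommGroup K] [InnerProductSpace ℂ K] [CompleteSpace K]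
    (S : K →L[ℂ] K) (hS : IsSelfAdjoint S) (r R : ℝ) (hrR : r < R)
    (hspec : spectrum ℝ S ⊆ Set.Icc r R)
    (f : ℝ → ℝ) (hfc : ContinuousOn f (Set.Icc r R))
    (hf : ConvexOn ℝ (Set.Icc r R) f) (dr dR : ℝ)
    (hdr : HasDerivWithinAt f dr (Set.Ioi r) r)
    (hdR : HasDerivWithinAt f dR (Set.Iio R) R)
    (x : K) (hx : ‖x‖ = 1) :
    0 ≤ (⟪(cfc f S) x, x⟫_ℂ).re - f ((⟪S x, x⟫_ℂ).re) ∧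
    (⟪(cfc f S) x, x⟫_ℂ).re - f ((⟪S x, x⟫_ℂ).re) ≤
      (1 / 4) * (R - r) * (dR - dr) :=
  cfc_jensen_defect_quarter_bound_general S hS r R hspec f hfc hf dr dR hdr hdR x hx
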